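/- arXiv:1904.12533 — 4 statements merged into one kernel-verified Lean document; each statement's English description precedes it below -/
import Mathlib

section
/- Let T be the full binary tree of depth k (nodes are binary strings of length at most k). Suppose its nodes are colored with n colors, and for each color i let m_i be the least non-negative integer such that T does not contain a monochromatic (color-i) full binary tree of depth m_i as a minor. Then the sum of the m_i over all n colors is at least k + 1. -/
/-- A monochromatic (color `i`) full binary tree of depth `m` as a minor of the
full binary tree of depth `k` (nodes: binary strings of length at most `k`),
colored by `c` with `n` colors.  The minor map sends children to proper
descendants, and the images of the two children of a node are incomparable. -/
def MonoMinor {n : ℕ} (k : ℕ) (c : List (Fin 2) → Fin n) (i : Fin n) (m : ℕ) : Prop :=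
  ∃ f : List (Fin 2) → List (Fin 2),
    (∀ v : List (Fin 2), v.length ≤ m → (f v).length ≤ k ∧ c (f v) = i) ∧
    (∀ (v : List (Fin 2)) (j : Fin 2), v.length < m →
        f v <+: f (v ++ [j]) ∧ f v ≠ f (v ++ [j])) ∧
    (∀ v : List (Fin 2), v.length < m →
        ¬ f (v ++ [0]) <+: f (v ++ [1]) ∧ ¬ f (v ++ [1]) <+: f (v ++ [0]))

lemma MonoMinor.mono {n k : ℕ} {c : List (Fin 2) → Fin n} {i : Fin n} {m m' : ℕ}
    (h : MonoMinor k c i m) (hle : m' ≤ m) : MonoMinor k c i m' := by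
  obtain ⟨f, h1, h2, h3⟩ := h
  exact ⟨f, fun v hv => h1 v (hv.trans hle),
    fun v j hv => h2 v j (hv.trans_le hle),
    fun v hv => h3 v (hv.trans_le hle)⟩

lemma not_monoMinor_succ {n k : ℕ} (c : List (Fin 2) → Fin n) (i : Fin n) :
    ¬ MonoMinor k c i (k + 1) := by
  rintro ⟨f, h1, h2, _⟩
  have key : ∀ v : List (Fin 2), v.length ≤ k + 1 → v.length ≤ (f v).length := by
    intro v
    induction v using List.reverseRecOn with
    | nil => intro _; exact Nat.zero_le _
    | append_singleton v a ih =>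
      intro hv
      rw [List.length_append, List.length_singleton] at hv ⊢
      have hv' : v.length < k + 1 := hv
      obtain ⟨hpre, hne⟩ := h2 v a hv'
      have hlt : (f v).length < (f (v ++ [a])).length :=
        lt_of_le_of_ne hpre.length_le (fun he => hne (hpre.eq_of_length he))
      have := ih (le_of_lt hv')
      omega
  have h := key (List.replicate (k + 1) 0) (by simp)
  have h' := (h1 (List.replicate (k + 1) 0) (by simp)).1
  simp at h
  omega

lemma monoMinor_zero {n k : ℕ} (c : List (Fin 2) → Fin n) :
    MonoMinor k c (c []) 0 :=
  ⟨fun _ => [], fun v _ => ⟨Nat.zero_le _, rfl⟩,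
    fun v j hv => absurd hv (Nat.not_lt_zero _),
    fun v hv => absurd hv (Nat.not_lt_zero _)⟩

lemma MonoMinor.lift {n k : ℕ} {c : List (Fin 2) → Fin n} {i : Fin n} {m : ℕ}
    (t : Fin 2) (h : MonoMinor k (fun w => c (t :: w)) i m) :
    MonoMinor (k + 1) c i m := by
  obtain ⟨f, h1, h2, h3⟩ := h
  refine ⟨fun v => t :: f v, fun v hv => ?_, fun v j hv => ?_, fun v hv => ?_⟩
  · exact ⟨by simpa using Nat.succ_le_succ (h1 v hv).1, (h1 v hv).2⟩
  · obtain ⟨hpre, hne⟩ := h2 v j hv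
    exact ⟨by simpa [List.cons_prefix_cons] using hpre,
      fun he => hne (by simpa using he)⟩
  · obtain ⟨ha, hb⟩ := h3 v hv
    constructor
    · intro hp; exact ha (by simpa [List.cons_prefix_cons] using hp)
    · intro hp; exact hb (by simpa [List.cons_prefix_cons] using hp)

lemma monoMinor_combine {n k : ℕ} {c : List (Fin 2) → Fin n} {i : Fin n} {d : ℕ}
    (hr : c [] = i)
    (h : ∀ t : Fin 2, MonoMinor k (fun w => c (t :: w)) i d) :
    MonoMinor (k + 1) c i (d + 1) := by
  choose F hF1 hF2 hF3 using h
  refine ⟨fun v => match v with | [] => [] | t :: rest => t :: F t rest,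
    ?_, ?_, ?_⟩
  · intro v hv
    match v with
    | [] => exact ⟨Nat.zero_le _, hr⟩
    | t :: rest =>
      simp only [List.length_cons] at hv
      have := hF1 t rest (by omega)
      exact ⟨by simpa using Nat.succ_le_succ this.1, this.2⟩
  · intro v j hv
    match v with
    | [] =>
      constructor
      · exact List.nil_prefix
      · simp
    | t :: rest =>
      simp only [List.length_cons] at hv
      have ⟨hpre, hne⟩ := hF2 t rest j (by omega)
      rw [List.cons_append]
      exact ⟨by simpa [List.cons_prefix_cons] using hpre,
        fun he => hne (by simpa using he)⟩
  · intro v hv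
    match v with
    | [] =>
      constructor
      · intro hp
        rw [List.nil_append, List.nil_append] at hp
        have : (0 : Fin 2) = 1 := (List.cons_prefix_cons.mp hp).1
        exact absurd this (by decide)
      · intro hp
        rw [List.nil_append, List.nil_append] at hp
        have : (1 : Fin 2) = 0 := (List.cons_prefix_cons.mp hp).1
        exact absurd this (by decide)
    | t :: rest =>
      simp only [List.length_cons] at hv
      have ⟨ha, hb⟩ := hF3 t rest (by omega)
      rw [List.cons_append, List.cons_append]
      constructor
      · intro hp; exact ha (by simpa [List.cons_prefix_cons] using hp)
      · intro hp; exact hb (by simpa [List.cons_prefix_cons] using hp)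

lemma main_aux (n : ℕ) : ∀ (k : ℕ) (c : List (Fin 2) → Fin n) (m : Fin n → ℕ),
    (∀ i : Fin n, IsLeast { m' : ℕ | ¬ MonoMinor k c i m' } (m i)) →
    k + 1 ≤ ∑ i : Fin n, m i := by
  intro k
  induction k with
  | zero =>
    intro c m hm
    set i0 := c [] with hi0
    have h0 : MonoMinor 0 c i0 0 := monoMinor_zero c
    have h1 : 1 ≤ m i0 := by
      rcases Nat.eq_zero_or_pos (m i0) with h | h
      · exact absurd ((hm i0).1) (by rw [h]; simp [h0])
      · exact h
    calc 1 ≤ m i0 := h1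
      _ ≤ ∑ i : Fin n, m i := Finset.single_le_sum (fun i _ => Nat.zero_le _) (Finset.mem_univ i0)
  | succ k ih =>
    intro c m hm
    -- subtree least values
    set msub : Fin 2 → Fin n → ℕ :=
      fun t i => sInf { m' : ℕ | ¬ MonoMinor k (fun w => c (t :: w)) i m' } with hmsub
    have hne : ∀ (t : Fin 2) (i : Fin n),
        { m' : ℕ | ¬ MonoMinor k (fun w => c (t :: w)) i m' }.Nonempty :=
      fun t i => ⟨k + 1, not_monoMinor_succ _ i⟩
    have hleast : ∀ (t : Fin 2) (i : Fin n),
        IsLeast { m' : ℕ | ¬ MonoMinor k (fun w => c (t :: w)) i m' } (msub t i) :=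
      fun t i => ⟨Nat.sInf_mem (hne t i), fun b hb => Nat.sInf_le hb⟩
    have hIH : ∀ t : Fin 2, k + 1 ≤ ∑ i : Fin n, msub t i :=
      fun t => ih (fun w => c (t :: w)) (msub t) (hleast t)
    -- each msub t i ≤ m i
    have hsub_le : ∀ (t : Fin 2) (i : Fin n), msub t i ≤ m i := by
      intro t i
      apply (hleast t i).2
      intro hmin
      exact (hm i).1 (hmin.lift t)
    -- combine at the root color
    set i0 := c [] with hi0
    set d := min (msub 0 i0) (msub 1 i0) with hd
    have hcomb : MonoMinor (k + 1) c i0 d := by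
      rcases Nat.eq_zero_or_pos d with h | h
      · rw [h]; exact monoMinor_zero c
      · obtain ⟨e, he⟩ := Nat.exists_eq_succ_of_ne_zero (Nat.pos_iff_ne_zero.mp h)
        rw [he]
        apply monoMinor_combine rfl
        intro t
        have het : e < msub t i0 := by
          have : d ≤ msub t i0 := by
            fin_cases t
            · exact min_le_left _ _
            · exact min_le_right _ _
          omega
        by_contra hno
        exact absurd ((hleast t i0).2 hno) (by omega)
    have hd_lt : d + 1 ≤ m i0 := by
      by_contra hno
      push_neg at hno
      exact (hm i0).1 (hcomb.mono (by omega))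
    -- pick the subtree achieving the min
    obtain ⟨t, ht⟩ : ∃ t : Fin 2, msub t i0 = d := by
      rcases le_total (msub 0 i0) (msub 1 i0) with h | h
      · exact ⟨0, (min_eq_left h).symm⟩
      · exact ⟨1, (min_eq_right h).symm⟩
    have key : ∀ i : Fin n, msub t i + (if i = i0 then 1 else 0) ≤ m i := by
      intro i
      by_cases h : i = i0
      · subst h; rw [if_pos rfl, ht]; exact hd_lt
      · rw [if_neg h]; simpa using hsub_le t i
    calc k + 1 + 1 ≤ (∑ i : Fin n, msub t i) + 1 := by
          have := hIH t; omega
      _ = ∑ i : Fin n, (msub t i + if i = i0 then 1 else 0) := by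
          rw [Finset.sum_add_distrib, Finset.sum_ite_eq' Finset.univ i0 (fun _ => 1)]
          simp
      _ ≤ ∑ i : Fin n, m i := Finset.sum_le_sum (fun i _ => key i)

/-- If the full binary tree of depth `k` is colored with `n` colors and, for each
color `i`, `m i` is the least non-negative integer such that there is no
monochromatic color-`i` full binary tree of depth `m i` as a minor, then
`∑ i, m i ≥ k + 1`. -/
theorem sum_of_mono_minor_bounds (n k : ℕ) (c : List (Fin 2) → Fin n)
    (m : Fin n → ℕ)
    (hm : ∀ i : Fin n, IsLeast { m' : ℕ | ¬ MonoMinor k c i m' } (m i)) :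
    k + 1 ≤ ∑ i : Fin n, m i :=
  main_aux n k c m hm
end

section
/- Let T be the full binary tree of depth n·k whose nodes are colored with n colors (n ≥ 1, k ≥ 0). Then T contains a monochromatic full binary tree of depth k as a minor. -/
namespace TreeRamseyAux

/-- Structural minor map of the full binary tree of depth `m` into the
tree of depth `K` (no color condition). -/
def Emb (K : ℕ) (f : List (Fin 2) → List (Fin 2)) (m : ℕ) : Prop :=
  (∀ v : List (Fin 2), v.length ≤ m → (f v).length ≤ K) ∧
  (∀ (v : List (Fin 2)) (j : Fin 2), v.length < m →
      f v <+: f (v ++ [j]) ∧ f v ≠ f (v ++ [j])) ∧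
  (∀ v : List (Fin 2), v.length < m →
      ¬ f (v ++ [0]) <+: f (v ++ [1]) ∧ ¬ f (v ++ [1]) <+: f (v ++ [0]))

lemma prefix_length_lt {x y : List (Fin 2)} (h : x <+: y) (hne : x ≠ y) :
    x.length < y.length :=
  lt_of_le_of_ne h.length_le (fun he => hne (h.eq_of_length he))

lemma emb_mono {K m : ℕ} {f : List (Fin 2) → List (Fin 2)} (hf : Emb K f m) :
    ∀ (t v : List (Fin 2)), (v ++ t).length ≤ m →
      f v <+: f (v ++ t) ∧ (t ≠ [] → (f v).length < (f (v ++ t)).length) := by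
  intro t
  induction t using List.reverseRecOn with
  | nil =>
    intro v h
    exact ⟨by simp, fun h' => absurd rfl h'⟩
  | append_singleton s j IH =>
    intro v h
    have hlen : (v ++ s).length < m := by
      simp [List.length_append] at h ⊢; omega
    have h1 := IH v (le_of_lt hlen)
    have h2 := hf.2.1 (v ++ s) j hlen
    have hpre : f v <+: f (v ++ (s ++ [j])) := by
      rw [← List.append_assoc]
      exact h1.1.trans h2.1
    refine ⟨hpre, fun _ => ?_⟩
    have h3 : (f (v ++ s)).length < (f ((v ++ s) ++ [j])).length :=
      prefix_length_lt h2.1 h2.2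
    have h4 : (f v).length ≤ (f (v ++ s)).length := h1.1.length_le
    rw [← List.append_assoc]
    omega

lemma incomp_ext {x y X Y : List (Fin 2)} (hxy : ¬ x <+: y) (hyx : ¬ y <+: x)
    (hx : x <+: X) (hy : y <+: Y) : ¬ X <+: Y ∧ ¬ Y <+: X := by
  constructor
  · intro h
    rcases List.prefix_or_prefix_of_prefix (hx.trans h) hy with h' | h'
    · exact hxy h'
    · exact hyx h'
  · intro h
    rcases List.prefix_or_prefix_of_prefix (hy.trans h) hx with h' | h'
    · exact hyx h'
    · exact hxy h'

lemma split_incomp : ∀ (x y : List (Fin 2)), ¬ x <+: y → ¬ y <+: x →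
    ∃ (p s t : List (Fin 2)) (a b : Fin 2),
      a ≠ b ∧ x = p ++ a :: s ∧ y = p ++ b :: t
  | [], _, hxy, _ => absurd List.nil_prefix hxy
  | _ :: _, [], _, hyx => absurd List.nil_prefix hyx
  | a :: x, b :: y, hxy, hyx => by
    by_cases hab : a = b
    · subst hab
      have h1 : ¬ x <+: y := fun h => hxy (List.cons_prefix_cons.2 ⟨rfl, h⟩)
      have h2 : ¬ y <+: x := fun h => hyx (List.cons_prefix_cons.2 ⟨rfl, h⟩)
      obtain ⟨p, s, t, a', b', hne, hx, hy⟩ := split_incomp x y h1 h2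
      exact ⟨a :: p, s, t, a', b', hne, by simp [hx], by simp [hy]⟩
    · exact ⟨[], x, y, a, b, hab, rfl, rfl⟩

lemma emb_incomp_map {K M : ℕ} {g : List (Fin 2) → List (Fin 2)} (hg : Emb K g M)
    {x y : List (Fin 2)} (hx : x.length ≤ M) (hy : y.length ≤ M)
    (h1 : ¬ x <+: y) (h2 : ¬ y <+: x) : ¬ g x <+: g y ∧ ¬ g y <+: g x := by
  obtain ⟨p, s, t, a, b, hab, rfl, rfl⟩ := split_incomp x y h1 h2
  have hpm : p.length < M := by simp [List.length_append] at hx; omega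
  have hinc := hg.2.2 p hpm
  have hincab : ¬ g (p ++ [a]) <+: g (p ++ [b]) ∧ ¬ g (p ++ [b]) <+: g (p ++ [a]) := by
    fin_cases a <;> fin_cases b <;> simp_all
  have hxa : g (p ++ [a]) <+: g (p ++ a :: s) := by
    have := (emb_mono hg s (p ++ [a]) (by simpa using hx)).1
    simpa using this
  have hyb : g (p ++ [b]) <+: g (p ++ b :: t) := by
    have := (emb_mono hg t (p ++ [b]) (by simpa using hy)).1
    simpa using this
  exact incomp_ext hincab.1 hincab.2 hxa hyb

lemma emb_comp {K M m : ℕ} {g h : List (Fin 2) → List (Fin 2)}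
    (hg : Emb K g M) (hh : Emb M h m) : Emb K (fun v => g (h v)) m := by
  refine ⟨?_, ?_, ?_⟩
  · intro v hv; exact hg.1 _ (hh.1 v hv)
  · intro v j hv
    obtain ⟨hpre, hne⟩ := hh.2.1 v j hv
    obtain ⟨t, ht⟩ := hpre
    have htne : t ≠ [] := by
      rintro rfl; simp at ht; exact hne ht
    have hlen : (h (v ++ [j])).length ≤ M := hh.1 _ (by simp; omega)
    have hm := emb_mono hg t (h v) (by rw [ht]; exact hlen)
    rw [ht] at hm
    have hlt := hm.2 htne
    refine ⟨hm.1, fun hEq => ?_⟩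
    have hEq' : g (h v) = g (h (v ++ [j])) := hEq
    rw [hEq'] at hlt
    omega
  · intro v hv
    have h0 := hh.2.2 v hv
    exact emb_incomp_map hg (hh.1 _ (by simp; omega)) (hh.1 _ (by simp; omega)) h0.1 h0.2

lemma emb_sub {K m : ℕ} {f : List (Fin 2) → List (Fin 2)} (hf : Emb K f (m + 1))
    (j : Fin 2) : Emb K (fun v => f (j :: v)) m := by
  refine ⟨?_, ?_, ?_⟩
  · intro v hv; exact hf.1 _ (by simp; omega)
  · intro v j' hv
    have := hf.2.1 (j :: v) j' (by simp; omega)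
    simpa using this
  · intro v hv
    have := hf.2.2 (j :: v) (by simp; omega)
    simpa using this

/-- Glue a root and two subtree maps. -/
def glue (r : List (Fin 2)) (g : Fin 2 → List (Fin 2) → List (Fin 2)) :
    List (Fin 2) → List (Fin 2)
  | [] => r
  | j :: w => g j w

lemma emb_glue {K M m : ℕ} {f : List (Fin 2) → List (Fin 2)}
    {g : Fin 2 → List (Fin 2) → List (Fin 2)}
    (hf : Emb K f M) (hM : 0 < M)
    (hg : ∀ j, Emb K (g j) m)
    (hp : ∀ j, f [j] <+: g j []) :
    Emb K (glue (f []) g) (m + 1) := by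
  have hroot : ∀ j : Fin 2, f [] <+: f [j] ∧ f [] ≠ f [j] := by
    intro j
    have := hf.2.1 [] j (by simpa using hM)
    simpa using this
  refine ⟨?_, ?_, ?_⟩
  · intro v hv
    match v with
    | [] => exact hf.1 [] (by simp)
    | j :: w => exact (hg j).1 w (by simp at hv; omega)
  · intro v j' hv
    match v with
    | [] =>
      show f [] <+: g j' [] ∧ f [] ≠ g j' []
      have h1 : f [] <+: g j' [] := (hroot j').1.trans (hp j')
      refine ⟨h1, fun hEq => ?_⟩
      have h2 : (f []).length < (f [j']).length :=
        prefix_length_lt (hroot j').1 (hroot j').2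
      have h3 : (f [j']).length ≤ (g j' []).length := (hp j').length_le
      rw [hEq] at h2; omega
    | j :: w =>
      show g j w <+: g j (w ++ [j']) ∧ g j w ≠ g j (w ++ [j'])
      exact (hg j).2.1 w j' (by simp at hv; omega)
  · intro v hv
    match v with
    | [] =>
      show (¬ g 0 [] <+: g 1 [] ∧ ¬ g 1 [] <+: g 0 [])
      have hinc := hf.2.2 [] (by simpa using hM)
      simp only [List.nil_append] at hinc
      exact incomp_ext hinc.1 hinc.2 (hp 0) (hp 1)
    | j :: w =>
      show (¬ g j (w ++ [0]) <+: g j (w ++ [1]) ∧ ¬ g j (w ++ [1]) <+: g j (w ++ [0]))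
      exact (hg j).2.2 w (by simp at hv; omega)

lemma dich {n : ℕ} (K : ℕ) (c : List (Fin 2) → Fin n) (i : Fin n) :
    ∀ (N a b : ℕ), a + b = N → ∀ f, Emb K f (a + b) →
      (∃ g, Emb K g a ∧ f [] <+: g [] ∧ ∀ v, v.length ≤ a → c (g v) = i) ∨
      (∃ g, Emb K g b ∧ f [] <+: g [] ∧ ∀ v, v.length ≤ b → c (g v) ≠ i) := by
  intro N
  induction N using Nat.strong_induction_on with
  | _ N IH =>
    intro a b hab f hf
    have hconst : Emb K (fun _ => f []) 0 :=
      ⟨fun v _ => hf.1 [] (by simp),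
        fun v j hv => (Nat.not_lt_zero _ hv).elim,
        fun v hv => (Nat.not_lt_zero _ hv).elim⟩
    by_cases hc : c (f []) = i
    · match a, hab with
      | 0, hab =>
        exact Or.inl ⟨fun _ => f [], hconst, List.prefix_refl _, fun v _ => hc⟩
      | a' + 1, hab =>
        have hf' : Emb K f (a' + b + 1) := by
          rw [show a' + b + 1 = a' + 1 + b by omega]; exact hf
        have hsub : ∀ j : Fin 2, Emb K (fun v => f (j :: v)) (a' + b) :=
          fun j => emb_sub hf' j
        have hrt : ∀ j : Fin 2, f [] <+: f [j] := by
          intro j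
          have h := hf.2.1 [] j (by simp only [List.length_nil]; omega)
          simpa using h.1
        have H : ∀ j : Fin 2,
            (∃ g, Emb K g a' ∧ f [j] <+: g [] ∧ ∀ v, v.length ≤ a' → c (g v) = i) ∨
            (∃ g, Emb K g b ∧ f [j] <+: g [] ∧ ∀ v, v.length ≤ b → c (g v) ≠ i) := by
          intro j
          have := IH (a' + b) (by omega) a' b rfl _ (hsub j)
          simpa using this
        rcases H 0 with h0 | ⟨g, hg1, hg2, hg3⟩
        · rcases H 1 with h1 | ⟨g, hg1, hg2, hg3⟩
          · obtain ⟨g0, hg0, hp0, hc0⟩ := h0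
            obtain ⟨g1, hg1, hp1, hc1⟩ := h1
            set G : Fin 2 → List (Fin 2) → List (Fin 2) :=
              fun j => if j = 0 then g0 else g1 with hG
            have hEmb : Emb K (glue (f []) G) (a' + 1) := by
              refine emb_glue hf (by omega) ?_ ?_
              · intro j
                fin_cases j
                · simpa [hG] using hg0
                · simpa [hG] using hg1
              · intro j
                fin_cases j
                · simpa [hG] using hp0
                · simpa [hG] using hp1
            refine Or.inl ⟨glue (f []) G, hEmb, List.prefix_refl _, ?_⟩
            intro v hv
            match v with
            | [] => exact hc
            | j :: w =>
              have hw : w.length ≤ a' := by simp at hv; omega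
              show c (G j w) = i
              fin_cases j <;> simp [hG] <;> [exact hc0 w hw; exact hc1 w hw]
          · exact Or.inr ⟨g, hg1, (hrt 1).trans hg2, hg3⟩
        · exact Or.inr ⟨g, hg1, (hrt 0).trans hg2, hg3⟩
    · match b, hab with
      | 0, hab =>
        exact Or.inr ⟨fun _ => f [], hconst, List.prefix_refl _, fun v _ => hc⟩
      | b' + 1, hab =>
        have hf' : Emb K f (a + b' + 1) := by
          rw [show a + b' + 1 = a + (b' + 1) by omega]; exact hf
        have hsub : ∀ j : Fin 2, Emb K (fun v => f (j :: v)) (a + b') :=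
          fun j => emb_sub hf' j
        have hrt : ∀ j : Fin 2, f [] <+: f [j] := by
          intro j
          have h := hf.2.1 [] j (by simp only [List.length_nil]; omega)
          simpa using h.1
        have H : ∀ j : Fin 2,
            (∃ g, Emb K g a ∧ f [j] <+: g [] ∧ ∀ v, v.length ≤ a → c (g v) = i) ∨
            (∃ g, Emb K g b' ∧ f [j] <+: g [] ∧ ∀ v, v.length ≤ b' → c (g v) ≠ i) := by
          intro j
          have := IH (a + b') (by omega) a b' rfl _ (hsub j)
          simpa using this
        rcases H 0 with ⟨g, hg1, hg2, hg3⟩ | h0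
        · exact Or.inl ⟨g, hg1, (hrt 0).trans hg2, hg3⟩
        · rcases H 1 with ⟨g, hg1, hg2, hg3⟩ | h1
          · exact Or.inl ⟨g, hg1, (hrt 1).trans hg2, hg3⟩
          · obtain ⟨g0, hg0, hp0, hc0⟩ := h0
            obtain ⟨g1, hg1, hp1, hc1⟩ := h1
            set G : Fin 2 → List (Fin 2) → List (Fin 2) :=
              fun j => if j = 0 then g0 else g1 with hG
            have hEmb : Emb K (glue (f []) G) (b' + 1) := by
              refine emb_glue hf (by omega) ?_ ?_
              · intro j
                fin_cases j
                · simpa [hG] using hg0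
                · simpa [hG] using hg1
              · intro j
                fin_cases j
                · simpa [hG] using hp0
                · simpa [hG] using hp1
            refine Or.inr ⟨glue (f []) G, hEmb, List.prefix_refl _, ?_⟩
            intro v hv
            match v with
            | [] => exact hc
            | j :: w =>
              have hw : w.length ≤ b' := by simp at hv; omega
              show c (G j w) ≠ i
              fin_cases j <;> simp [hG] <;> [exact hc0 w hw; exact hc1 w hw]

lemma emb_id (K m : ℕ) (h : m ≤ K) : Emb K (fun v => v) m := by
  refine ⟨fun v hv => le_trans hv h, fun v j hv => ⟨by simp, by simp⟩, fun v hv => ?_⟩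
  constructor <;> intro hp <;>
    · have := hp.eq_of_length (by simp)
      simp at this

lemma main_aux : ∀ (n k : ℕ) (c : List (Fin 2) → Fin (n + 1)),
    ∃ i, ∃ g, Emb ((n + 1) * k) g k ∧ ∀ v, v.length ≤ k → c (g v) = i := by
  intro n
  induction n with
  | zero =>
    intro k c
    refine ⟨c [], fun v => v, emb_id ((0 + 1) * k) k (by omega), fun v _ => Fin.ext ?_⟩
    have h1 := (c v).isLt
    have h2 := (c []).isLt
    show (c v).val = (c []).val
    omega
  | succ n IH =>
    intro k c
    have hid : Emb ((n + 2) * k) (fun v => v) (k + (n + 1) * k) :=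
      emb_id _ _ (le_of_eq (by ring))
    rcases dich ((n + 2) * k) c (Fin.last (n + 1)) (k + (n + 1) * k) k ((n + 1) * k)
        rfl _ hid with ⟨g, hg1, _, hg3⟩ | ⟨g, hg1, _, hg3⟩
    · exact ⟨Fin.last (n + 1), g, hg1, hg3⟩
    · set c' : List (Fin 2) → Fin (n + 1) := fun v =>
        if h : (c (g v)).val < n + 1 then ⟨(c (g v)).val, h⟩ else 0 with hc'
      obtain ⟨i', h', hh1, hh2⟩ := IH k c'
      refine ⟨Fin.castSucc i', fun v => g (h' v), emb_comp hg1 hh1, ?_⟩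
      intro v hv
      have hlen : (h' v).length ≤ (n + 1) * k := hh1.1 v hv
      have hne := hg3 (h' v) hlen
      have hlt : (c (g (h' v))).val < n + 1 := by
        have h2 : (c (g (h' v))).val ≠ n + 1 := fun h => hne (Fin.ext (by simp [h]))
        have h1 := (c (g (h' v))).isLt
        omega
      have := hh2 v hv
      rw [hc'] at this
      simp only [dif_pos hlt] at this
      apply Fin.ext
      have : ((⟨(c (g (h' v))).val, hlt⟩ : Fin (n + 1))).val = i'.val := by rw [this]
      simpa using this

end TreeRamseyAux


/-- If the full binary tree of depth `n·k` is colored with `n ≥ 1` colors, then it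
contains a monochromatic full binary tree of depth `k` as a minor. -/
theorem mono_minor_of_coloring (n k : ℕ) (hn : 1 ≤ n)
    (c : List (Fin 2) → Fin n) :
    ∃ i : Fin n, MonoMinor (n * k) c i k := by
  obtain ⟨n', rfl⟩ : ∃ n', n = n' + 1 := ⟨n - 1, by omega⟩
  obtain ⟨i, g, hg, hcol⟩ := TreeRamseyAux.main_aux n' k c
  exact ⟨i, g, fun v hv => ⟨hg.1 v hv, hcol v hv⟩, hg.2.1, hg.2.2⟩
end

section
/- Let T be the full binary tree of depth n·k·d whose nodes are colored with n colors, where k ≥ 0 and n, d ≥ 1. Then T contains as a minor a monochromatic full binary tree of depth k such that any two distinct nodes in the range of the minor map have tree-distance at least d in T. -/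
/-- Length of the longest common prefix of two binary strings. -/
def lcpLen : List (Fin 2) → List (Fin 2) → ℕ
  | a :: as, b :: bs => if a = b then lcpLen as bs + 1 else 0
  | _, _ => 0

/-- Tree distance between two nodes of the full binary tree (binary strings):
the length of the unique undirected path between them. -/
def treeDist (u v : List (Fin 2)) : ℕ :=
  (u.length - lcpLen u v) + (v.length - lcpLen u v)

/-! ### lcpLen lemmas -/

lemma lcpLen_of_prefix : ∀ {u v : List (Fin 2)}, u <+: v → lcpLen u v = u.length := by
  intro u
  induction u with
  | nil => intro v _; cases v <;> rfl
  | cons a as ih =>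
    intro v hv
    cases v with
    | nil => exact absurd hv.length_le (by simp)
    | cons b bs =>
      rw [List.cons_prefix_cons] at hv
      simp [lcpLen, hv.1, ih hv.2]

lemma lcpLen_comm : ∀ u v : List (Fin 2), lcpLen u v = lcpLen v u := by
  intro u
  induction u with
  | nil => intro v; cases v <;> rfl
  | cons a as ih =>
    intro v
    cases v with
    | nil => rfl
    | cons b bs =>
      by_cases h : a = b
      · subst h; simp [lcpLen, ih]
      · simp [lcpLen, h, Ne.symm h]

lemma lcpLen_le_of_split : ∀ (x : List (Fin 2)) {a b : Fin 2} {u v : List (Fin 2)},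
    a ≠ b → x ++ [a] <+: u → x ++ [b] <+: v → lcpLen u v ≤ x.length := by
  intro x
  induction x with
  | nil =>
    intro a b u v hab hu hv
    obtain ⟨u', rfl⟩ := hu
    obtain ⟨v', rfl⟩ := hv
    simp [lcpLen, hab]
  | cons c cs ih =>
    intro a b u v hab hu hv
    obtain ⟨u', rfl⟩ := hu
    obtain ⟨v', rfl⟩ := hv
    have := ih hab (List.prefix_append (cs ++ [a]) u') (List.prefix_append (cs ++ [b]) v')
    have he : ∀ (t : List (Fin 2)) (x : Fin 2),
        ((c :: cs) ++ [x]) ++ t = c :: ((cs ++ [x]) ++ t) := by intro t x; simp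
    rw [he u' a, he v' b, lcpLen, if_pos rfl]
    simp only [List.length_cons]
    omega

lemma eq_of_split_prefix {x : List (Fin 2)} {a b : Fin 2} {u : List (Fin 2)}
    (hu : x ++ [a] <+: u) (hv : x ++ [b] <+: u) : a = b := by
  rcases List.prefix_or_prefix_of_prefix hu hv with h | h
  · have := h.eq_of_length (by simp)
    simpa using this
  · have := h.eq_of_length (by simp)
    simpa using (this.symm)

/-- trichotomy -/
lemma list_tri : ∀ v w : List (Fin 2), v <+: w ∨ w <+: v ∨
    ∃ x a b, a ≠ b ∧ x ++ [a] <+: v ∧ x ++ [b] <+: w := by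
  intro v
  induction v with
  | nil => intro w; exact Or.inl (List.nil_prefix)
  | cons a as ih =>
    intro w
    cases w with
    | nil => exact Or.inr (Or.inl List.nil_prefix)
    | cons b bs =>
      by_cases hab : a = b
      · subst hab
        rcases ih bs with h | h | ⟨x, p, q, hpq, h1, h2⟩
        · exact Or.inl (by rw [List.cons_prefix_cons]; exact ⟨rfl, h⟩)
        · exact Or.inr (Or.inl (by rw [List.cons_prefix_cons]; exact ⟨rfl, h⟩))
        · refine Or.inr (Or.inr ⟨a :: x, p, q, hpq, ?_, ?_⟩) <;>
            · rw [List.cons_append, List.cons_prefix_cons]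
              first | exact ⟨rfl, h1⟩ | exact ⟨rfl, h2⟩
      · refine Or.inr (Or.inr ⟨[], a, b, hab, ?_, ?_⟩) <;> simp

/-! ### The building predicate -/

variable {n : ℕ}

def Bld (c : List (Fin 2) → Fin n) (N d : ℕ) (i : Fin n) : ℕ → List (Fin 2) → Prop
  | 0, _ => True
  | j+1, u => ∃ w, u <+: w ∧ w.length ≤ N ∧ c w = i ∧
      Bld c N d i j (w ++ (0 : Fin 2) :: List.replicate (d-1) 0) ∧
      Bld c N d i j (w ++ (1 : Fin 2) :: List.replicate (d-1) 0)

lemma Bld_mono {c : List (Fin 2) → Fin n} {N d : ℕ} {i : Fin n} {j : ℕ} {u u' : List (Fin 2)}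
    (h : u <+: u') (hb : Bld c N d i j u') : Bld c N d i j u := by
  cases j with
  | zero => trivial
  | succ j =>
    obtain ⟨w, hw, h2, h3, h4, h5⟩ := hb
    exact ⟨w, h.trans hw, h2, h3, h4, h5⟩

lemma Bld_anti {c : List (Fin 2) → Fin n} {N d : ℕ} {i : Fin n} :
    ∀ {j : ℕ} {u : List (Fin 2)}, Bld c N d i (j+1) u → Bld c N d i j u := by
  intro j
  induction j with
  | zero => intro u _; trivial
  | succ j ih =>
    intro u hb
    obtain ⟨w, hw, h2, h3, h4, h5⟩ := hb
    exact ⟨w, hw, h2, h3, ih h4, ih h5⟩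

lemma Bld_le {c : List (Fin 2) → Fin n} {N d : ℕ} {i : Fin n} {j j' : ℕ} {u : List (Fin 2)}
    (h : j' ≤ j) (hb : Bld c N d i j u) : Bld c N d i j' u := by
  induction h with
  | refl => exact hb
  | step h ih => exact ih (Bld_anti hb)

lemma length_pad {u : List (Fin 2)} {b : Fin 2} {d : ℕ} (hd : 1 ≤ d) :
    (u ++ b :: List.replicate (d-1) (0 : Fin 2)).length = u.length + d := by
  simp; omega

/-! ### The potential argument -/

lemma exists_vec (c : List (Fin 2) → Fin n) (N d : ℕ) (hd : 1 ≤ d) :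
    ∀ (m : ℕ) (u : List (Fin 2)), u.length + m * d ≤ N →
    ∃ a : Fin n → ℕ, m + 1 ≤ ∑ i, a i ∧ ∀ i, Bld c N d i (a i) u := by
  intro m
  induction m with
  | zero =>
    intro u hu
    refine ⟨fun i => if i = c u then 1 else 0, ?_, ?_⟩
    · simp
    · intro i
      by_cases h : i = c u
      · simp only [h, if_pos rfl]
        exact ⟨u, List.prefix_refl u, by omega, rfl, trivial, trivial⟩
      · simp only [if_neg h]; trivial
  | succ m ih =>
    intro u hu
    set u0 := u ++ (0 : Fin 2) :: List.replicate (d-1) (0 : Fin 2) with hu0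
    set u1 := u ++ (1 : Fin 2) :: List.replicate (d-1) (0 : Fin 2) with hu1
    have l0 : u0.length = u.length + d := length_pad hd
    have l1 : u1.length = u.length + d := length_pad hd
    obtain ⟨a0, hs0, hb0⟩ := ih u0 (by rw [l0]; nlinarith)
    obtain ⟨a1, hs1, hb1⟩ := ih u1 (by rw [l1]; nlinarith)
    set i₀ := c u with hi₀
    rcases le_total (a0 i₀) (a1 i₀) with hle | hle
    · refine ⟨fun i => if i = i₀ then a0 i₀ + 1 else max (a0 i) (a1 i), ?_, ?_⟩
      · calc m + 1 + 1 ≤ (∑ i, a0 i) + 1 := by omega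
          _ = ∑ i, (a0 i + if i = i₀ then 1 else 0) := by
              rw [Finset.sum_add_distrib]; simp
          _ ≤ _ := by
              apply Finset.sum_le_sum
              intro i _
              by_cases h : i = i₀ <;> simp [h] <;> omega
      · intro i
        by_cases h : i = i₀
        · simp only [h, if_pos rfl]
          refine ⟨u, List.prefix_refl u, by omega, hi₀.symm, ?_, ?_⟩
          · exact hb0 i₀
          · exact Bld_le hle (hb1 i₀)
        · simp only [if_neg h]
          rcases le_total (a0 i) (a1 i) with h' | h'
          · rw [max_eq_right h']
            exact Bld_mono (List.prefix_append u _) (hb1 i)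
          · rw [max_eq_left h']
            exact Bld_mono (List.prefix_append u _) (hb0 i)
    · refine ⟨fun i => if i = i₀ then a1 i₀ + 1 else max (a0 i) (a1 i), ?_, ?_⟩
      · calc m + 1 + 1 ≤ (∑ i, a1 i) + 1 := by omega
          _ = ∑ i, (a1 i + if i = i₀ then 1 else 0) := by
              rw [Finset.sum_add_distrib]; simp
          _ ≤ _ := by
              apply Finset.sum_le_sum
              intro i _
              by_cases h : i = i₀ <;> simp [h] <;> omega
      · intro i
        by_cases h : i = i₀
        · simp only [h, if_pos rfl]
          refine ⟨u, List.prefix_refl u, by omega, hi₀.symm, ?_, ?_⟩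
          · exact Bld_le hle (hb0 i₀)
          · exact hb1 i₀
        · simp only [if_neg h]
          rcases le_total (a0 i) (a1 i) with h' | h'
          · rw [max_eq_right h']
            exact Bld_mono (List.prefix_append u _) (hb1 i)
          · rw [max_eq_left h']
            exact Bld_mono (List.prefix_append u _) (hb0 i)

/-! ### Extraction -/

open Classical in
noncomputable def pick (c : List (Fin 2) → Fin n) (N d : ℕ) (i : Fin n)
    (j : ℕ) (u : List (Fin 2)) : List (Fin 2) :=
  if h : Bld c N d i (j+1) u then h.choose else u

lemma pick_spec {c : List (Fin 2) → Fin n} {N d : ℕ} {i : Fin n} {j : ℕ} {u : List (Fin 2)}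
    (h : Bld c N d i (j+1) u) :
    u <+: pick c N d i j u ∧ (pick c N d i j u).length ≤ N ∧ c (pick c N d i j u) = i ∧
    Bld c N d i j (pick c N d i j u ++ (0 : Fin 2) :: List.replicate (d-1) 0) ∧
    Bld c N d i j (pick c N d i j u ++ (1 : Fin 2) :: List.replicate (d-1) 0) := by
  unfold pick
  rw [dif_pos h]
  exact h.choose_spec

noncomputable def go (c : List (Fin 2) → Fin n) (N d : ℕ) (i : Fin n) :
    ℕ → List (Fin 2) → List (Fin 2) → List (Fin 2)
  | j, [], u => pick c N d i j u
  | j, b :: v, u => go c N d i (j-1) v (pick c N d i j u ++ b :: List.replicate (d-1) 0)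

lemma go_spec {c : List (Fin 2) → Fin n} {N d : ℕ} {i : Fin n} :
    ∀ (v : List (Fin 2)) (j : ℕ) (u : List (Fin 2)), v.length ≤ j → Bld c N d i (j+1) u →
    u <+: go c N d i j v u ∧ (go c N d i j v u).length ≤ N ∧ c (go c N d i j v u) = i := by
  intro v
  induction v with
  | nil =>
    intro j u _ hb
    obtain ⟨h1, h2, h3, _⟩ := pick_spec hb
    exact ⟨h1, h2, h3⟩
  | cons b v ih =>
    intro j u hl hb
    simp only [List.length_cons] at hl
    obtain ⟨j, rfl⟩ : ∃ j', j = j' + 1 := ⟨j - 1, by omega⟩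
    obtain ⟨h1, h2, h3, h4, h5⟩ := pick_spec hb
    have hbc : Bld c N d i (j+1) (pick c N d i (j+1) u ++ b :: List.replicate (d-1) 0) := by
      fin_cases b
      · exact h4
      · exact h5
    have := ih j _ (by omega) hbc
    simp only [go, Nat.add_sub_cancel]
    exact ⟨h1.trans ((List.prefix_append _ _).trans this.1), this.2.1, this.2.2⟩

lemma go_child {c : List (Fin 2) → Fin n} {N d : ℕ} {i : Fin n} :
    ∀ (v : List (Fin 2)) (j : ℕ) (u : List (Fin 2)) (b : Fin 2),
    v.length + 1 ≤ j → Bld c N d i (j+1) u →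
    go c N d i j v u ++ b :: List.replicate (d-1) 0 <+: go c N d i j (v ++ [b]) u := by
  intro v
  induction v with
  | nil =>
    intro j u b hl hb
    obtain ⟨j, rfl⟩ : ∃ j', j = j' + 1 := ⟨j - 1, by omega⟩
    obtain ⟨h1, h2, h3, h4, h5⟩ := pick_spec hb
    have hbc : Bld c N d i (j+1) (pick c N d i (j+1) u ++ b :: List.replicate (d-1) 0) := by
      fin_cases b
      · exact h4
      · exact h5
    simp only [go, List.nil_append, Nat.add_sub_cancel]
    exact (pick_spec hbc).1
  | cons a v ih =>
    intro j u b hl hb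
    simp only [List.length_cons] at hl
    obtain ⟨j, rfl⟩ : ∃ j', j = j' + 1 := ⟨j - 1, by omega⟩
    obtain ⟨h1, h2, h3, h4, h5⟩ := pick_spec hb
    have hbc : Bld c N d i (j+1) (pick c N d i (j+1) u ++ a :: List.replicate (d-1) 0) := by
      fin_cases a
      · exact h4
      · exact h5
    simp only [List.cons_append, go, Nat.add_sub_cancel]
    exact ih j _ b (by omega) hbc

/-- If the full binary tree of depth `n·k·d` is colored with `n ≥ 1` colors
(`k ≥ 0`, `d ≥ 1`), then it contains as a minor a monochromatic full binary tree
of depth `k` such that any two distinct nodes in the range of the (injective)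
minor map have tree-distance at least `d`. -/
theorem mono_minor_far_apart (n k d : ℕ) (hn : 1 ≤ n) (hd : 1 ≤ d)
    (c : List (Fin 2) → Fin n) :
    ∃ (i : Fin n) (f : List (Fin 2) → List (Fin 2)),
      (∀ v : List (Fin 2), v.length ≤ k →
        (f v).length ≤ n * k * d ∧ c (f v) = i) ∧
      (∀ (v : List (Fin 2)) (j : Fin 2), v.length < k →
        f v <+: f (v ++ [j]) ∧ f v ≠ f (v ++ [j])) ∧
      (∀ v : List (Fin 2), v.length < k →
        ¬ f (v ++ [0]) <+: f (v ++ [1]) ∧ ¬ f (v ++ [1]) <+: f (v ++ [0])) ∧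
      (∀ v w : List (Fin 2), v.length ≤ k → w.length ≤ k → v ≠ w → f v ≠ f w) ∧
      (∀ v w : List (Fin 2), v.length ≤ k → w.length ≤ k → f v ≠ f w →
        d ≤ treeDist (f v) (f w)) := by
  set N := n * k * d with hN
  -- get a color with a deep building
  obtain ⟨a, hsum, hbld⟩ := exists_vec c N d hd (n * k) [] (by simp [hN])
  have hpig : ∃ i, k + 1 ≤ a i := by
    by_contra h
    push_neg at h
    have : ∑ i, a i ≤ n * k := by
      calc ∑ i, a i ≤ (Finset.univ : Finset (Fin n)).card • k :=
            Finset.sum_le_card_nsmul _ _ _ (fun i _ => by have := h i; omega)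
        _ = n * k := by simp [Finset.card_univ, smul_eq_mul]
    omega
  obtain ⟨i, hik⟩ := hpig
  have hB : Bld c N d i (k+1) [] := Bld_le hik (hbld i)
  set f : List (Fin 2) → List (Fin 2) := fun v => go c N d i k v [] with hf
  -- basic specs
  have fspec : ∀ v : List (Fin 2), v.length ≤ k → (f v).length ≤ N ∧ c (f v) = i := by
    intro v hv
    exact (go_spec v k [] hv hB).2
  have fchild : ∀ (v : List (Fin 2)) (b : Fin 2), v.length < k →
      f v ++ b :: List.replicate (d-1) 0 <+: f (v ++ [b]) := by
    intro v b hv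
    exact go_child v k [] b (by omega) hB
  have fchild' : ∀ (v : List (Fin 2)) (b : Fin 2), v.length < k →
      f v ++ [b] <+: f (v ++ [b]) ∧ (f v).length + d ≤ (f (v ++ [b])).length := by
    intro v b hv
    have h := fchild v b hv
    constructor
    · refine List.IsPrefix.trans ?_ h
      exact ⟨List.replicate (d-1) 0, by simp⟩
    · have := h.length_le
      rw [length_pad hd] at this
      exact this
  -- monotone along prefixes
  have fmono : ∀ w : List (Fin 2), ∀ v, v <+: w → w.length ≤ k →
      f v <+: f w ∧ (f v).length + (w.length - v.length) * d ≤ (f w).length := by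
    intro w
    induction w using List.reverseRecOn with
    | nil =>
      intro v hv _
      have : v = [] := List.prefix_nil.mp hv
      subst this
      simp
    | append_singleton l b ih =>
      intro v hv hl
      rcases List.prefix_concat_iff.mp hv with rfl | hv'
      · simp
      · have hlk : l.length < k := by
          have := hl
          simp at this ⊢
          omega
        obtain ⟨h1, h2⟩ := ih v hv' (by omega)
        obtain ⟨h3, h4⟩ := fchild' l b hlk
        refine ⟨h1.trans ((List.prefix_append _ _).trans ((List.prefix_refl _).trans h3)), ?_⟩
        · have hvl : v.length ≤ l.length := hv'.length_le
          have : (l ++ [b]).length = l.length + 1 := by simp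
          rw [this]
          have he2 : l.length + 1 - v.length = (l.length - v.length) + 1 := by omega
          have : (l.length + 1 - v.length) * d = (l.length - v.length) * d + d := by
            rw [he2, Nat.add_mul, one_mul]
          omega
  -- split divergence
  have fsplit : ∀ (x v : List (Fin 2)) (b : Fin 2), x ++ [b] <+: v → v.length ≤ k →
      f x ++ [b] <+: f v ∧ (f x).length + d ≤ (f v).length := by
    intro x v b hxv hv
    have hxk : x.length < k := by
      have := hxv.length_le
      simp at this
      omega
    obtain ⟨h1, h2⟩ := fmono v (x ++ [b]) hxv hv
    obtain ⟨h3, h4⟩ := fchild' x b hxk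
    exact ⟨h3.trans h1, by omega⟩
  refine ⟨i, f, fspec, ?_, ?_, ?_, ?_⟩
  · -- children: prefix and ≠
    intro v b hv
    obtain ⟨h1, h2⟩ := fchild' v b hv
    refine ⟨(List.prefix_append _ _).trans h1, ?_⟩
    intro heq
    have := congrArg List.length heq
    omega
  · -- siblings incomparable
    intro v hv
    have h0 := (fchild' v 0 hv).1
    have h1 := (fchild' v 1 hv).1
    constructor
    · intro hpre
      have : (0 : Fin 2) = 1 := eq_of_split_prefix (h0.trans hpre) h1
      simp at this
    · intro hpre
      have : (1 : Fin 2) = 0 := eq_of_split_prefix (h1.trans hpre) h0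
      simp at this
  · -- injectivity
    intro v w hvk hwk hvw heq
    rcases list_tri v w with h | h | ⟨x, p, q, hpq, h1, h2⟩
    · obtain ⟨_, hlen⟩ := fmono w v h hwk
      have hvltw : v.length < w.length := by
        rcases lt_or_eq_of_le h.length_le with h' | h'
        · exact h'
        · exact absurd (h.eq_of_length h') hvw
      have := congrArg List.length heq
      have : (w.length - v.length) * d ≥ 1 * 1 := Nat.mul_le_mul (by omega) hd
      omega
    · obtain ⟨_, hlen⟩ := fmono v w h hvk
      have hwltv : w.length < v.length := by
        rcases lt_or_eq_of_le h.length_le with h' | h'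
        · exact h'
        · exact absurd (h.eq_of_length h').symm hvw
      have := congrArg List.length heq
      have : (v.length - w.length) * d ≥ 1 * 1 := Nat.mul_le_mul (by omega) hd
      omega
    · have hp := (fsplit x v p h1 hvk).1
      have hq := (fsplit x w q h2 hwk).1
      rw [heq] at hp
      exact hpq (eq_of_split_prefix hp hq)
  · -- distance
    intro v w hvk hwk hne
    have hvw : v ≠ w := by rintro rfl; exact hne rfl
    rcases list_tri v w with h | h | ⟨x, p, q, hpq, h1, h2⟩
    · obtain ⟨hpre, hlen⟩ := fmono w v h hwk
      have hvltw : v.length < w.length := by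
        rcases lt_or_eq_of_le h.length_le with h' | h'
        · exact h'
        · exact absurd (h.eq_of_length h') hvw
      have hL : lcpLen (f v) (f w) = (f v).length := lcpLen_of_prefix hpre
      have hd1 : ((w.length - v.length)) * d ≥ 1 * d := Nat.mul_le_mul (by omega) le_rfl
      rw [treeDist, hL]
      omega
    · obtain ⟨hpre, hlen⟩ := fmono v w h hvk
      have hwltv : w.length < v.length := by
        rcases lt_or_eq_of_le h.length_le with h' | h'
        · exact h'
        · exact absurd (h.eq_of_length h').symm hvw
      have hL : lcpLen (f v) (f w) = (f w).length := by
        rw [lcpLen_comm]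
        exact lcpLen_of_prefix hpre
      have hd1 : ((v.length - w.length)) * d ≥ 1 * d := Nat.mul_le_mul (by omega) le_rfl
      rw [treeDist, hL]
      omega
    · obtain ⟨hp, hlp⟩ := fsplit x v p h1 hvk
      obtain ⟨hq, hlq⟩ := fsplit x w q h2 hwk
      have hL : lcpLen (f v) (f w) ≤ (f x).length := lcpLen_le_of_split (f x) hpq hp hq
      rw [treeDist]
      omega
end

section
/- Every rooted tree A with branching number br(A) = m admits a path decomposition V_1, …, V_n in which every bag has size at most m + 2, every intersection of consecutive bags has size at most m + 1, and the root of A belongs to the last bag V_n. -/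
/-- A rooted tree, encoded as a finite prefix-closed set of finite sequences of
natural numbers containing the root `[]`; `v ++ [i]` is a child of `v`. -/
def IsTreeSet (T : Finset (List ℕ)) : Prop :=
  [] ∈ T ∧ ∀ (v : List ℕ) (i : ℕ), v ++ [i] ∈ T → v ∈ T

/-- Every node of `T` has at most `d` children (out-degree at most `d`). -/
def DegLE (T : Finset (List ℕ)) (d : ℕ) : Prop :=
  ∀ v ∈ T, { i : ℕ | v ++ [i] ∈ T }.ncard ≤ d

/-- Every node of `T` has depth at most `n`. -/
def DepthLE (T : Finset (List ℕ)) (n : ℕ) : Prop :=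
  ∀ v ∈ T, v.length ≤ n

/-- `v` is a leaf of `T`. -/
def IsLeaf (T : Finset (List ℕ)) (v : List ℕ) : Prop :=
  v ∈ T ∧ ∀ i : ℕ, v ++ [i] ∉ T

/-- The number of leaves of `T`. -/
noncomputable def leafCount (T : Finset (List ℕ)) : ℕ :=
  { v : List ℕ | IsLeaf T v }.ncard

/-- `T` contains the full binary tree of depth `m` as a minor: there is a map
`f` from binary strings of length at most `m` into `T` sending children to
proper descendants, such that the images of the two children of a node are
incomparable. -/
def HasFBTMinor (T : Finset (List ℕ)) (m : ℕ) : Prop :=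
  ∃ f : List (Fin 2) → List ℕ,
    (∀ v : List (Fin 2), v.length ≤ m → f v ∈ T) ∧
    (∀ (v : List (Fin 2)) (j : Fin 2), v.length < m →
        f v <+: f (v ++ [j]) ∧ f v ≠ f (v ++ [j])) ∧
    (∀ v : List (Fin 2), v.length < m →
        ¬ f (v ++ [0]) <+: f (v ++ [1]) ∧ ¬ f (v ++ [1]) <+: f (v ++ [0]))

/-- `br` is a branching-number labelling of the tree `T`: leaves get `0`; an
inner node whose children's maximum branching number is `M` gets `M + 1` if at
least two children attain `M`, and `M` otherwise. -/
def IsBranchingLabelling (T : Finset (List ℕ)) (br : List ℕ → ℕ) : Prop :=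
  (∀ v ∈ T, (∀ i : ℕ, v ++ [i] ∉ T) → br v = 0) ∧
  (∀ v ∈ T, (∃ i : ℕ, v ++ [i] ∈ T) →
    ∃ M : ℕ,
      (∀ i : ℕ, v ++ [i] ∈ T → br (v ++ [i]) ≤ M) ∧
      (∃ i : ℕ, v ++ [i] ∈ T ∧ br (v ++ [i]) = M) ∧
      ((2 ≤ { i : ℕ | v ++ [i] ∈ T ∧ br (v ++ [i]) = M }.ncard ∧ br v = M + 1) ∨
       ({ i : ℕ | v ++ [i] ∈ T ∧ br (v ++ [i]) = M }.ncard ≤ 1 ∧ br v = M)))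

/-!
Induction on the tree. At a node with children, let `i₀` be a child of maximal branching
number: by the definition of the branching number, every other (light) child has branching
number strictly below that of the node. The decomposition is the heavy child's decomposition,
then the bag `{[i₀], []}`, then each light child's decomposition with the root added to every
bag. Adding the root costs one in bag size and in adhesion, which the light children can
afford; consecutive pieces share at most one vertex, and every bag after the heavy part
contains the root, in particular the last one.
-/

open Finset

namespace BagList

variable {α β ι : Type*}

def ContiguousBags (L : List (Finset α)) : Prop :=
  ∀ (i j k : ℕ) (hi : i < L.length) (hj : j < L.length) (hk : k < L.length),
    i ≤ j → j ≤ k → ∀ v, v ∈ L[i] → v ∈ L[k] → v ∈ L[j]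

theorem contiguousBags_singleton (B : Finset α) : ContiguousBags [B] := by
  intro i j k _ hj _ _ _ v hv _
  obtain rfl : j = 0 := by simpa using hj
  simpa using hv

theorem ContiguousBags.append {L₁ L₂ : List (Finset α)} (h₁ : ContiguousBags L₁)
    (h₂ : ContiguousBags L₂)
    (hcross : ∀ v, (∃ A ∈ L₁, v ∈ A) → (∃ B ∈ L₂, v ∈ B) →
      (∀ A ∈ L₁.getLast?, v ∈ A) ∧ ∀ B ∈ L₂.head?, v ∈ B) :
    ContiguousBags (L₁ ++ L₂) := by
  intro i j k hi hj hk hij hjk v hvi hvk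
  simp only [List.length_append] at hi hj hk
  simp only [List.getElem_append] at hvi hvk ⊢
  split_ifs at hvi hvk ⊢ <;> try omega
  · exact h₁ i j k (by omega) (by omega) (by omega) hij hjk v hvi hvk
  · obtain ⟨hlast, -⟩ := hcross v ⟨_, List.getElem_mem _, hvi⟩ ⟨_, List.getElem_mem _, hvk⟩
    exact h₁ i j (L₁.length - 1) (by omega) (by omega) (by omega) hij (by omega) v hvi
      (hlast _ (by simp [List.getLast?_eq_getElem?]))
  · obtain ⟨-, hhead⟩ := hcross v ⟨_, List.getElem_mem _, hvi⟩ ⟨_, List.getElem_mem _, hvk⟩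
    exact h₂ 0 (j - L₁.length) (k - L₁.length) (by omega) (by omega) (by omega) (by omega)
      (by omega) v (hhead _ (by simp [List.head?_eq_getElem?])) hvk
  · exact h₂ _ _ _ (by omega) (by omega) (by omega) (by omega) (by omega) v hvi hvk

theorem ContiguousBags.map {L : List (Finset α)} (h : ContiguousBags L)
    (f : Finset α → Finset β)
    (hf : ∀ v, (∀ A, v ∈ f A) ∨ (∀ A, v ∉ f A) ∨ ∃ w, ∀ A, v ∈ f A ↔ w ∈ A) :
    ContiguousBags (L.map f) := by
  intro i j k hi hj hk hij hjk v hvi hvk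
  simp only [List.length_map, List.getElem_map] at hi hj hk hvi hvk ⊢
  rcases hf v with hall | hnone | ⟨w, hw⟩
  · exact hall _
  · exact absurd hvi (hnone _)
  · rw [hw] at hvi hvk ⊢
    exact h i j k hi hj hk hij hjk w hvi hvk

theorem ContiguousBags.map_image [DecidableEq β] {L : List (Finset α)} (h : ContiguousBags L)
    {f : α → β} (hf : Function.Injective f) : ContiguousBags (L.map (Finset.image f)) := by
  refine h.map _ fun v => ?_
  by_cases hv : ∃ w, f w = v
  · obtain ⟨w, rfl⟩ := hv
    exact Or.inr (Or.inr ⟨w, fun A => hf.mem_finset_image⟩)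
  · push Not at hv
    exact Or.inr (Or.inl fun A hvA => by
      obtain ⟨w, -, hw⟩ := mem_image.mp hvA
      exact hv w hw)

theorem ContiguousBags.map_insert [DecidableEq α] {L : List (Finset α)} (h : ContiguousBags L)
    (a : α) : ContiguousBags (L.map (insert a)) := by
  refine h.map _ fun v => ?_
  by_cases hv : v = a
  · exact Or.inl fun A => hv ▸ mem_insert_self v A
  · exact Or.inr (Or.inr ⟨v, fun A => by simp [hv]⟩)

theorem ContiguousBags.flatMap {cs : List ι} (hcs : cs.Nodup) {part : ι → List (Finset α)}
    {a : α} (own : α → ι) (h : ∀ j ∈ cs, ContiguousBags (part j))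
    (ha : ∀ j ∈ cs, ∀ B ∈ part j, a ∈ B)
    (hown : ∀ j ∈ cs, ∀ B ∈ part j, ∀ v ∈ B, v ≠ a → own v = j) :
    ContiguousBags (cs.flatMap part) := by
  induction cs with
  | nil => intro i j k hi; simp at hi
  | cons c cs ih =>
    obtain ⟨hc, hcs⟩ := List.nodup_cons.mp hcs
    simp only [List.mem_cons, forall_eq_or_imp] at h ha hown
    rw [List.flatMap_cons]
    refine h.1.append (ih hcs h.2 ha.2 hown.2) fun v ⟨A, hA, hvA⟩ ⟨B, hB, hvB⟩ => ?_
    obtain ⟨j, hj, hBj⟩ := List.mem_flatMap.mp hB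
    obtain rfl : v = a := by
      by_contra hva
      exact hc (hown.1 A hA v hvA hva ▸ hown.2 j hj B hBj v hvB hva ▸ hj)
    refine ⟨fun A' hA' => ha.1 A' (List.mem_of_getLast? hA'), fun B' hB' => ?_⟩
    obtain ⟨j', hj', hB'j'⟩ := List.mem_flatMap.mp (List.mem_of_head? hB')
    exact ha.2 j' hj' B' hB'j'

theorem _root_.List.IsChain.flatMap {R : β → β → Prop} {cs : List ι} (hcs : cs.Nodup)
    {part : ι → List β} (h : ∀ j ∈ cs, (part j).IsChain R)
    (hR : ∀ j ∈ cs, ∀ j' ∈ cs, j ≠ j' → ∀ A ∈ part j, ∀ B ∈ part j', R A B) :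
    (cs.flatMap part).IsChain R := by
  induction cs with
  | nil => exact List.isChain_nil
  | cons c cs ih =>
    obtain ⟨hc, hcs⟩ := List.nodup_cons.mp hcs
    rw [List.flatMap_cons]
    refine (h c List.mem_cons_self).append
      (ih hcs (fun j hj => h j (List.mem_cons_of_mem c hj))
        fun j hj j' hj' => hR j (List.mem_cons_of_mem c hj) j' (List.mem_cons_of_mem c hj'))
      fun A hA B hB => ?_
    obtain ⟨j, hj, hBj⟩ := List.mem_flatMap.mp (List.mem_of_head? hB)
    exact hR c List.mem_cons_self j (List.mem_cons_of_mem c hj) (fun hcj => hc (hcj ▸ hj))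
      A (List.mem_of_getLast? hA) B hBj

theorem card_inter_le_one [DecidableEq α] {A B : Finset α} (x : α)
    (h : ∀ v ∈ A, v ∈ B → v = x) : #(A ∩ B) ≤ 1 :=
  card_le_one.mpr fun u hu w hw => by
    rw [mem_inter] at hu hw
    rw [h u hu.1 hu.2, h w hw.1 hw.2]

end BagList

open BagList

namespace TreeSet

noncomputable def subtree (T : Finset (List ℕ)) (i : ℕ) : Finset (List ℕ) :=
  T.preimage (i :: ·) List.cons_injective.injOn

noncomputable def rootChildren (T : Finset (List ℕ)) : Finset ℕ :=
  T.preimage (fun i => [i]) fun _ _ _ _ h => List.singleton_injective h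

variable {T : Finset (List ℕ)}

@[simp]
theorem mem_subtree {i : ℕ} {w : List ℕ} : w ∈ subtree T i ↔ i :: w ∈ T :=
  mem_preimage

@[simp]
theorem mem_rootChildren {i : ℕ} : i ∈ rootChildren T ↔ [i] ∈ T :=
  mem_preimage

theorem card_subtree_lt (hT : [] ∈ T) (i : ℕ) : #(subtree T i) < #T :=
  calc #(subtree T i) ≤ #(T.erase []) :=
        card_le_card_of_injOn (i :: ·) (fun w hw => by simpa using hw)
          List.cons_injective.injOn
    _ < #T := card_erase_lt_of_mem hT

theorem image_cons_subset {i : ℕ} {B : Finset (List ℕ)} (hB : B ⊆ subtree T i) :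
    B.image (i :: ·) ⊆ T :=
  image_subset_iff.mpr fun _ hw => mem_subtree.mp (hB hw)

end TreeSet

open TreeSet

variable {T : Finset (List ℕ)}

theorem IsTreeSet.singleton_mem (hT : IsTreeSet T) {i : ℕ} {w : List ℕ} (h : i :: w ∈ T) :
    [i] ∈ T := by
  induction w using List.reverseRecOn with
  | nil => exact h
  | append_singleton w a ih => exact ih (hT.2 (i :: w) a h)

theorem IsTreeSet.subtree (hT : IsTreeSet T) {i : ℕ} (hi : [i] ∈ T) :
    IsTreeSet (subtree T i) :=
  ⟨mem_subtree.mpr hi, fun v j h => mem_subtree.mpr (hT.2 (i :: v) j (by simpa using h))⟩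

theorem IsTreeSet.eq_nil_of_forall_not_mem (hT : IsTreeSet T) (hleaf : ∀ i, [i] ∉ T)
    {v : List ℕ} (hv : v ∈ T) : v = [] := by
  cases v with
  | nil => rfl
  | cons i _ => exact absurd (hT.singleton_mem hv) (hleaf i)

theorem IsBranchingLabelling.subtree {br : List ℕ → ℕ} (hbr : IsBranchingLabelling T br)
    (i : ℕ) : IsBranchingLabelling (subtree T i) (fun w => br (i :: w)) := by
  refine ⟨fun v hv hleaf => hbr.1 (i :: v) (mem_subtree.mp hv) fun j hj =>
    hleaf j (by simpa using hj), fun v hv ⟨j, hj⟩ => ?_⟩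
  simpa using hbr.2 (i :: v) (mem_subtree.mp hv) ⟨j, by simpa using hj⟩

theorem IsBranchingLabelling.exists_heavy_child {br : List ℕ → ℕ}
    (hbr : IsBranchingLabelling T br) {v : List ℕ} (hv : v ∈ T) (hc : ∃ i, v ++ [i] ∈ T) :
    ∃ i₀, v ++ [i₀] ∈ T ∧ br (v ++ [i₀]) ≤ br v ∧
      ∀ j, v ++ [j] ∈ T → j ≠ i₀ → br (v ++ [j]) < br v := by
  obtain ⟨M, hle, ⟨i₀, hi₀, hi₀M⟩, hcase⟩ := hbr.2 v hv hc
  refine ⟨i₀, hi₀, by omega, fun j hj hji₀ => ?_⟩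
  rcases hcase with ⟨-, hbv⟩ | ⟨hone, hbv⟩
  · have := hle j hj
    omega
  · have hfin : {i : ℕ | v ++ [i] ∈ T ∧ br (v ++ [i]) = M}.Finite :=
      (T.finite_toSet.preimage (fun _ _ _ _ h => by simpa using h)).subset fun i hi => hi.1
    have hjM : br (v ++ [j]) ≠ M := fun hjM =>
      hji₀ ((Set.ncard_le_one hfin).mp hone j ⟨hj, hjM⟩ i₀ ⟨hi₀, hi₀M⟩)
    have := hle j hj
    omega

structure IsPathDecomp (T : Finset (List ℕ)) (m : ℕ) (L : List (Finset (List ℕ))) : Prop where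
  subset : ∀ B ∈ L, B ⊆ T
  cover : ∀ v ∈ T, ∃ B ∈ L, v ∈ B
  edge : ∀ v j, v ++ [j] ∈ T → ∃ B ∈ L, v ∈ B ∧ v ++ [j] ∈ B
  contiguous : ContiguousBags L
  card_le : ∀ B ∈ L, #B ≤ m + 2
  adhesion : L.IsChain fun A B => #(A ∩ B) ≤ m + 1
  root_mem_last : ∃ B ∈ L.getLast?, [] ∈ B

theorem IsTreeSet.isPathDecomp_of_forall_not_mem (hT : IsTreeSet T) (hleaf : ∀ i, [i] ∉ T) :
    IsPathDecomp T 0 [{[]}] where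
  subset := by simpa using hT.1
  cover v hv := ⟨{[]}, by simp [hT.eq_nil_of_forall_not_mem hleaf hv]⟩
  edge v j h := absurd (hT.eq_nil_of_forall_not_mem hleaf h) (by simp)
  contiguous := contiguousBags_singleton _
  card_le := by simp
  adhesion := List.isChain_singleton _
  root_mem_last := by simp

namespace TreeSet

def heavyPart (i₀ : ℕ) (D : ℕ → List (Finset (List ℕ))) : List (Finset (List ℕ)) :=
  (D i₀).map (image (i₀ :: ·))

def lightPart (D : ℕ → List (Finset (List ℕ))) (j : ℕ) : List (Finset (List ℕ)) :=
  ((D j).map (image (j :: ·))).map (insert [])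

noncomputable def lightChildren (T : Finset (List ℕ)) (i₀ : ℕ) : List ℕ :=
  ((rootChildren T).erase i₀).toList

noncomputable def rootDecomp (T : Finset (List ℕ)) (i₀ : ℕ) (D : ℕ → List (Finset (List ℕ))) :
    List (Finset (List ℕ)) :=
  heavyPart i₀ D ++ {[i₀], []} :: (lightChildren T i₀).flatMap (lightPart D)

variable {i₀ : ℕ} {D : ℕ → List (Finset (List ℕ))}

@[simp]
theorem mem_lightChildren {j : ℕ} : j ∈ lightChildren T i₀ ↔ j ≠ i₀ ∧ [j] ∈ T := by
  simp [lightChildren]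

theorem mem_rootDecomp {B : Finset (List ℕ)} :
    B ∈ rootDecomp T i₀ D ↔ (∃ B₀ ∈ D i₀, B₀.image (i₀ :: ·) = B) ∨ B = {[i₀], []} ∨
      ∃ j ∈ lightChildren T i₀, ∃ B₀ ∈ D j, insert [] (B₀.image (j :: ·)) = B := by
  simp [rootDecomp, heavyPart, lightPart, -mem_lightChildren]

theorem exists_eq_cons_of_mem_heavyPart {B : Finset (List ℕ)} (hB : B ∈ heavyPart i₀ D)
    {v : List ℕ} (hv : v ∈ B) : ∃ w, v = i₀ :: w := by
  obtain ⟨B₀, -, rfl⟩ := List.mem_map.mp hB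
  obtain ⟨w, -, rfl⟩ := mem_image.mp hv
  exact ⟨w, rfl⟩

theorem eq_nil_or_exists_eq_cons_of_mem_lightPart {j : ℕ} {B : Finset (List ℕ)}
    (hB : B ∈ lightPart D j) {v : List ℕ} (hv : v ∈ B) : v = [] ∨ ∃ w, v = j :: w := by
  obtain ⟨B₀, -, rfl⟩ : ∃ B₀ ∈ D j, insert [] (B₀.image (j :: ·)) = B := by
    simpa [lightPart] using hB
  rcases mem_insert.mp hv with rfl | hv
  · exact Or.inl rfl
  · obtain ⟨w, -, rfl⟩ := mem_image.mp hv
    exact Or.inr ⟨w, rfl⟩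

theorem nil_mem_of_mem_lightPart {j : ℕ} {B : Finset (List ℕ)} (hB : B ∈ lightPart D j) :
    [] ∈ B := by
  obtain ⟨B₀, -, rfl⟩ := List.mem_map.mp hB
  exact mem_insert_self _ _

theorem eq_nil_of_mem_lightPart_of_mem_pair {j : ℕ} (hj : j ∈ lightChildren T i₀)
    {B : Finset (List ℕ)} (hB : B ∈ lightPart D j) {v : List ℕ} (hvB : v ∈ B)
    (hv : v ∈ ({[i₀], []} : Finset (List ℕ))) : v = [] := by
  rcases eq_nil_or_exists_eq_cons_of_mem_lightPart hB hvB with rfl | ⟨w, rfl⟩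
  · rfl
  · simp only [mem_insert, mem_singleton, List.cons.injEq, reduceCtorEq, or_false] at hv
    exact absurd hv.1 (mem_lightChildren.mp hj).1

theorem contiguousBags_rootDecomp (hD : ∀ j ∈ rootChildren T, ContiguousBags (D j))
    (hi₀ : [i₀] ∈ T) (hroot : ∃ B ∈ (D i₀).getLast?, [] ∈ B) :
    ContiguousBags (rootDecomp T i₀ D) := by
  have hlights : ContiguousBags ((lightChildren T i₀).flatMap (lightPart D)) := by
    refine ContiguousBags.flatMap (nodup_toList _) List.headI
      (fun j hj => ((hD j (by simp_all)).map_image List.cons_injective).map_insert [])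
      (fun j _ B hB => nil_mem_of_mem_lightPart hB) fun j _ B hB v hvB hv => ?_
    obtain ⟨w, rfl⟩ := (eq_nil_or_exists_eq_cons_of_mem_lightPart hB hvB).resolve_left hv
    rfl
  have htail : ContiguousBags ({[i₀], []} :: (lightChildren T i₀).flatMap (lightPart D)) := by
    refine (contiguousBags_singleton _).append hlights fun v ⟨A, hA, hvA⟩ ⟨B, hB, hvB⟩ => ?_
    obtain ⟨j, hj, hBj⟩ := List.mem_flatMap.mp hB
    obtain rfl := eq_nil_of_mem_lightPart_of_mem_pair hj hBj hvB (List.mem_singleton.mp hA ▸ hvA)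
    refine ⟨by simp, fun B' hB' => ?_⟩
    obtain ⟨j', -, hB'j'⟩ := List.mem_flatMap.mp (List.mem_of_head? hB')
    exact nil_mem_of_mem_lightPart hB'j'
  refine ((hD i₀ (by simpa using hi₀)).map_image List.cons_injective).append htail
    fun v ⟨A, hA, hvA⟩ ⟨B, hB, hvB⟩ => ?_
  obtain ⟨w, rfl⟩ := exists_eq_cons_of_mem_heavyPart hA hvA
  rcases List.mem_cons.mp hB with rfl | hB
  · obtain rfl : w = [] := by simpa using hvB
    obtain ⟨B₀, hB₀, hnil⟩ := hroot
    refine ⟨fun A' hA' => ?_, by simp⟩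
    rw [List.getLast?_map, hB₀, Option.mem_def, Option.map_some, Option.some_inj] at hA'
    exact hA' ▸ mem_image_of_mem _ hnil
  · obtain ⟨j, hj, hBj⟩ := List.mem_flatMap.mp hB
    rcases eq_nil_or_exists_eq_cons_of_mem_lightPart hBj hvB with h | ⟨w', h⟩
    · simp at h
    · exact absurd (List.cons.inj h).1.symm (mem_lightChildren.mp hj).1

theorem isChain_heavyPart {k : ℕ} (h : (D i₀).IsChain fun A B => #(A ∩ B) ≤ k) :
    (heavyPart i₀ D).IsChain fun A B => #(A ∩ B) ≤ k :=
  (List.isChain_map _).mpr <| h.imp fun A B hAB => by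
    rw [← image_inter _ _ List.cons_injective]
    exact card_image_le.trans hAB

theorem isChain_lightPart {j k : ℕ} (h : (D j).IsChain fun A B => #(A ∩ B) ≤ k) :
    (lightPart D j).IsChain fun A B => #(A ∩ B) ≤ k + 1 :=
  (List.isChain_map _).mpr <| (List.isChain_map _).mpr <| h.imp fun A B hAB =>
    calc #(insert [] (A.image (j :: ·)) ∩ insert [] (B.image (j :: ·)))
        = #(insert [] ((A ∩ B).image (j :: ·))) := by
          rw [← insert_inter_distrib, ← image_inter _ _ List.cons_injective]
      _ ≤ #((A ∩ B).image (j :: ·)) + 1 := card_insert_le _ _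
      _ ≤ k + 1 := by grw [card_image_le, hAB]

theorem rootDecomp_adhesion {b : ℕ → ℕ} {m : ℕ}
    (hD : ∀ j ∈ rootChildren T, (D j).IsChain fun A B => #(A ∩ B) ≤ b j + 1)
    (hi₀ : [i₀] ∈ T) (hheavy : b i₀ ≤ m)
    (hlight : ∀ j ∈ lightChildren T i₀, b j + 1 ≤ m) :
    (rootDecomp T i₀ D).IsChain fun A B => #(A ∩ B) ≤ m + 1 := by
  have hlights : ((lightChildren T i₀).flatMap (lightPart D)).IsChain
      fun A B => #(A ∩ B) ≤ m + 1 := by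
    refine List.IsChain.flatMap (nodup_toList _)
      (fun j hj => (isChain_lightPart (hD j (by simp_all))).imp fun A B hAB => by
        have := hlight j hj
        omega)
      fun j _ j' _ hjj' A hA B hB => (card_inter_le_one [] fun v hvA hvB => ?_).trans (by omega)
    rcases eq_nil_or_exists_eq_cons_of_mem_lightPart hA hvA with h | ⟨w, rfl⟩
    · exact h
    · rcases eq_nil_or_exists_eq_cons_of_mem_lightPart hB hvB with h | ⟨w', h⟩
      · exact h
      · exact absurd (List.cons.inj h).1 hjj'
  refine ((isChain_heavyPart (hD i₀ (by simpa using hi₀))).imp fun A B hAB => by omega).append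
    (hlights.cons fun B hB => ?_) fun A hA B hB => ?_
  · obtain ⟨j, hj, hBj⟩ := List.mem_flatMap.mp (List.mem_of_head? hB)
    refine (card_inter_le_one [] fun v hvJ hvB => ?_).trans (by omega)
    exact eq_nil_of_mem_lightPart_of_mem_pair hj hBj hvB hvJ
  · obtain rfl : {[i₀], []} = B := by simpa using hB
    refine (card_inter_le_one [i₀] fun v hvA hvJ => ?_).trans (by omega)
    obtain ⟨w, rfl⟩ := exists_eq_cons_of_mem_heavyPart (List.mem_of_getLast? hA) hvA
    simpa using hvJ

theorem rootDecomp_card_le {b : ℕ → ℕ} {m : ℕ}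
    (hD : ∀ j ∈ rootChildren T, ∀ B ∈ D j, #B ≤ b j + 2)
    (hi₀ : [i₀] ∈ T) (hheavy : b i₀ ≤ m)
    (hlight : ∀ j ∈ lightChildren T i₀, b j + 1 ≤ m) :
    ∀ B ∈ rootDecomp T i₀ D, #B ≤ m + 2 := by
  intro B hB
  rcases mem_rootDecomp.mp hB with ⟨B₀, hB₀, rfl⟩ | rfl | ⟨j, hj, B₀, hB₀, rfl⟩
  · grw [card_image_le, hD i₀ (by simpa using hi₀) B₀ hB₀, hheavy]
  · exact card_le_two.trans (by omega)
  · have := hlight j hj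
    grw [card_insert_le, card_image_le, hD j (by simp_all) B₀ hB₀]
    omega

theorem rootDecomp_root_mem_last : ∃ B ∈ (rootDecomp T i₀ D).getLast?, [] ∈ B := by
  rw [rootDecomp, List.getLast?_append_of_ne_nil _ (List.cons_ne_nil _ _),
    List.getLast?_eq_some_getLast (List.cons_ne_nil _ _)]
  refine ⟨_, rfl, ?_⟩
  rcases List.mem_cons.mp (List.getLast_mem (List.cons_ne_nil _ _)) with h | h
  · rw [h]
    simp
  · obtain ⟨j, -, hBj⟩ := List.mem_flatMap.mp h
    exact nil_mem_of_mem_lightPart hBj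

theorem insert_image_mem_rootDecomp {j : ℕ} (hj : j ∈ lightChildren T i₀)
    {B₀ : Finset (List ℕ)} (hB₀ : B₀ ∈ D j) :
    insert [] (B₀.image (j :: ·)) ∈ rootDecomp T i₀ D :=
  mem_rootDecomp.mpr (Or.inr (Or.inr ⟨j, hj, B₀, hB₀, rfl⟩))

theorem exists_mem_rootDecomp_image_subset {j : ℕ} (hj : [j] ∈ T) {B₀ : Finset (List ℕ)}
    (hB₀ : B₀ ∈ D j) : ∃ B ∈ rootDecomp T i₀ D, B₀.image (j :: ·) ⊆ B := by
  by_cases hji₀ : j = i₀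
  · subst hji₀
    exact ⟨_, mem_rootDecomp.mpr (Or.inl ⟨B₀, hB₀, rfl⟩), subset_refl _⟩
  · exact ⟨_, insert_image_mem_rootDecomp (mem_lightChildren.mpr ⟨hji₀, hj⟩) hB₀,
      subset_insert _ _⟩

theorem isPathDecomp_rootDecomp (hT : IsTreeSet T) (hi₀ : [i₀] ∈ T) {b : ℕ → ℕ} {m : ℕ}
    (hD : ∀ j ∈ rootChildren T, IsPathDecomp (subtree T j) (b j) (D j))
    (hheavy : b i₀ ≤ m) (hlight : ∀ j ∈ lightChildren T i₀, b j + 1 ≤ m) :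
    IsPathDecomp T m (rootDecomp T i₀ D) where
  subset B hB := by
    rcases mem_rootDecomp.mp hB with ⟨B₀, hB₀, rfl⟩ | rfl | ⟨j, hj, B₀, hB₀, rfl⟩
    · exact image_cons_subset ((hD i₀ (by simpa using hi₀)).subset B₀ hB₀)
    · simp [insert_subset_iff, hi₀, hT.1]
    · exact insert_subset hT.1 (image_cons_subset ((hD j (by simp_all)).subset B₀ hB₀))
  cover v hv := by
    cases v with
    | nil => exact ⟨_, mem_rootDecomp.mpr (Or.inr (Or.inl rfl)), by simp⟩
    | cons a w =>
      have ha := hT.singleton_mem hv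
      obtain ⟨B₀, hB₀, hw⟩ := (hD a (by simpa using ha)).cover w (mem_subtree.mpr hv)
      obtain ⟨B, hB, hsub⟩ := exists_mem_rootDecomp_image_subset ha hB₀
      exact ⟨B, hB, hsub (mem_image_of_mem _ hw)⟩
  edge v k hvk := by
    cases v with
    | nil =>
      rw [List.nil_append] at hvk ⊢
      by_cases hk : k = i₀
      · subst hk
        exact ⟨_, mem_rootDecomp.mpr (Or.inr (Or.inl rfl)), by simp⟩
      · obtain ⟨B₀, hB₀, hnil⟩ := (hD k (by simpa using hvk)).root_mem_last
        exact ⟨_, insert_image_mem_rootDecomp (mem_lightChildren.mpr ⟨hk, hvk⟩)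
          (List.mem_of_getLast? hB₀), mem_insert_self _ _,
          mem_insert_of_mem (mem_image_of_mem _ hnil)⟩
    | cons a w =>
      have ha := hT.singleton_mem hvk
      obtain ⟨B₀, hB₀, hw, hwk⟩ := (hD a (by simpa using ha)).edge w k (by simpa using hvk)
      obtain ⟨B, hB, hsub⟩ := exists_mem_rootDecomp_image_subset ha hB₀
      exact ⟨B, hB, hsub (mem_image_of_mem _ hw), hsub (mem_image_of_mem _ hwk)⟩
  contiguous := contiguousBags_rootDecomp (fun j hj => (hD j hj).contiguous) hi₀
    (hD i₀ (by simpa using hi₀)).root_mem_last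
  card_le := rootDecomp_card_le (fun j hj => (hD j hj).card_le) hi₀ hheavy hlight
  adhesion := rootDecomp_adhesion (fun j hj => (hD j hj).adhesion) hi₀ hheavy hlight
  root_mem_last := rootDecomp_root_mem_last

end TreeSet

theorem exists_isPathDecomp (hT : IsTreeSet T) {br : List ℕ → ℕ}
    (hbr : IsBranchingLabelling T br) : ∃ L, IsPathDecomp T (br []) L := by
  induction hn : #T using Nat.strong_induction_on generalizing T br with
  | _ n ih =>
  by_cases hleaf : ∀ i, [i] ∉ T
  · rw [hbr.1 [] hT.1 (by simpa using hleaf)]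
    exact ⟨_, hT.isPathDecomp_of_forall_not_mem hleaf⟩
  push Not at hleaf
  obtain ⟨i₀, hi₀, hheavy, hlight⟩ := hbr.exists_heavy_child hT.1 (by simpa using hleaf)
  have hsub : ∀ j, ∃ L, j ∈ rootChildren T → IsPathDecomp (subtree T j) (br [j]) L := by
    intro j
    by_cases hj : j ∈ rootChildren T
    · obtain ⟨L, hL⟩ := ih _ (hn ▸ card_subtree_lt hT.1 j)
        (hT.subtree (mem_rootChildren.mp hj)) (hbr.subtree j) rfl
      exact ⟨L, fun _ => hL⟩
    · exact ⟨[], fun h => absurd h hj⟩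
  choose D hD using hsub
  exact ⟨_, isPathDecomp_rootDecomp hT hi₀ hD hheavy fun j hj =>
    hlight j (mem_lightChildren.mp hj).2 (mem_lightChildren.mp hj).1⟩

/-- Every rooted tree `T` with branching number `m` (at the root) admits a path
decomposition in which every bag has size at most `m + 2`, every intersection
of consecutive bags has size at most `m + 1`, and the root belongs to the last
bag. -/
theorem path_decomposition_of_branching (T : Finset (List ℕ)) (hT : IsTreeSet T)
    (br : List ℕ → ℕ) (hbr : IsBranchingLabelling T br) (m : ℕ) (hm : br [] = m) :
    ∃ (n : ℕ) (B : Fin (n + 1) → Finset (List ℕ)),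
      (∀ i, ∀ v ∈ B i, v ∈ T) ∧
      (∀ v ∈ T, ∃ i, v ∈ B i) ∧
      (∀ (v : List ℕ) (j : ℕ), v ++ [j] ∈ T → ∃ i, v ∈ B i ∧ v ++ [j] ∈ B i) ∧
      (∀ i j l : Fin (n + 1), i ≤ j → j ≤ l → ∀ v, v ∈ B i → v ∈ B l → v ∈ B j) ∧
      (∀ i, (B i).card ≤ m + 2) ∧
      (∀ i : Fin n, (B i.castSucc ∩ B i.succ).card ≤ m + 1) ∧
      [] ∈ B (Fin.last n) := by
  obtain ⟨L, hL⟩ := exists_isPathDecomp hT hbr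
  subst hm
  obtain ⟨B₀, hB₀, hroot⟩ := hL.root_mem_last
  have hlen : L.length - 1 + 1 = L.length :=
    Nat.sub_add_cancel (List.length_pos_of_mem (List.mem_of_getLast? hB₀))
  refine ⟨L.length - 1, fun i => L[i.val], fun i => hL.subset _ (List.getElem_mem _),
    fun v hv => ?_, fun v j hvj => ?_, fun i j l hij hjl v => hL.contiguous i j l (by omega)
      (by omega) (by omega) hij hjl v, fun i => hL.card_le _ (List.getElem_mem _),
    fun i => hL.adhesion.getElem i (by omega), ?_⟩
  · obtain ⟨B, hB, hvB⟩ := hL.cover v hv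
    obtain ⟨i, hi, rfl⟩ := List.mem_iff_getElem.mp hB
    exact ⟨⟨i, by omega⟩, hvB⟩
  · obtain ⟨B, hB, hv, hvj⟩ := hL.edge v j hvj
    obtain ⟨i, hi, rfl⟩ := List.mem_iff_getElem.mp hB
    exact ⟨⟨i, by omega⟩, hv, hvj⟩
  · rw [List.getLast?_eq_getElem?, Option.mem_def, List.getElem?_eq_some_iff] at hB₀
    simpa [hB₀.2] using hroot
end
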